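/- arXiv:2605.30657 — 2 statements merged into one kernel-verified Lean document; each statement's English description precedes it below -/
import Mathlib

section
/- Fix $\sigma \ge 0$ and let $u, v \in \ell^2(\mathbb{Z})$. Then $\Big\| \sum_{\xi_1+\xi_2 = \xi} \frac{\langle\xi_2\rangle^{\sigma}}{\langle\xi_1\rangle^{\sigma+1}}\,\big(\operatorname{sgn}(\xi) - \operatorname{sgn}(\xi_2)\big)\, u(\xi_1)\, v(\xi_2) \Big\|_{\ell^2_\xi} \le C\, \|u\|_{\ell^2}\, \|v\|_{\ell^2}$ for a constant $C>0$ independent of $u,v$ (but possibly depending on $\sigma$). -/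
/-!
With `ξ₂ = ξ - ξ₁`, the factor `sgn ξ - sgn ξ₂` vanishes unless `|ξ₂| ≤ |ξ₁|`, so the kernel is
bounded by `2 ⟨ξ₁⟩⁻¹`, uniformly in `ξ`. Cauchy–Schwarz in `ξ₁` then bounds the `ξ`-th entry `S(ξ)`
of the convolution by `|S(ξ)|² ≤ 4 (∑ ⟨ξ₁⟩⁻²) ∑_{ξ₁} |u(ξ₁)|² |v(ξ - ξ₁)|²`, and summing over `ξ` (Tonelli and
translation invariance) yields the bound with `C = 2 (∑ ⟨ξ⟩⁻²)^{1/2}`. The estimates are carried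
out in `ℝ≥0∞`, where no summability bookkeeping is needed.
-/

open Complex

/-- Japanese bracket `⟨ξ⟩ = (1 + ξ²)^{1/2}` on the integers. -/
noncomputable def jap (ξ : ℤ) : ℝ := Real.sqrt (1 + (ξ : ℝ) ^ 2)

open scoped ENNReal

theorem one_le_jap (ξ : ℤ) : 1 ≤ jap ξ :=
  Real.one_le_sqrt.mpr (le_add_of_nonneg_right (sq_nonneg _))

theorem jap_pos (ξ : ℤ) : 0 < jap ξ := one_pos.trans_le (one_le_jap ξ)

theorem jap_sq (ξ : ℤ) : jap ξ ^ 2 = 1 + (ξ : ℝ) ^ 2 := Real.sq_sqrt (by positivity)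

theorem jap_le_jap {ξ η : ℤ} (h : |ξ| ≤ |η|) : jap ξ ≤ jap η := by
  refine Real.sqrt_le_sqrt (add_le_add_right ?_ 1)
  rw [← sq_abs, ← sq_abs (η : ℝ)]
  exact_mod_cast pow_le_pow_left₀ (abs_nonneg ξ) h 2

theorem summable_norm_inv_jap_sq : Summable fun ξ : ℤ => ‖(jap ξ)⁻¹‖ ^ 2 := by
  refine (Real.summable_one_div_int_pow.mpr one_lt_two).of_norm_bounded_eventually ?_
  filter_upwards [Filter.eventually_cofinite_ne 0] with ξ hξ
  rw [norm_pow, norm_norm, norm_inv, Real.norm_of_nonneg (jap_pos ξ).le, inv_pow, jap_sq, one_div]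
  have hξ_sq : (0 : ℝ) < (ξ : ℝ) ^ 2 := sq_pos_of_ne_zero (by exact_mod_cast hξ)
  exact inv_anti₀ hξ_sq (by linarith)

theorem abs_sub_le_abs_of_sign_ne {ξ η : ℤ} (h : Int.sign ξ ≠ Int.sign (ξ - η)) :
    |ξ - η| ≤ |η| := by
  rcases lt_trichotomy ξ 0 with h1 | h1 | h1 <;> rcases lt_trichotomy (ξ - η) 0 with h2 | h2 | h2 <;>
    simp_all [Int.sign_eq_neg_one_of_neg, Int.sign_eq_one_of_pos, abs_le, le_abs] <;> omega

theorem abs_sign_sub_sign_le (a b : ℤ) : |Int.sign a - Int.sign b| ≤ 2 := by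
  rcases Int.sign_trichotomy a with ha | ha | ha <;> rcases Int.sign_trichotomy b with hb | hb | hb <;>
    simp [ha, hb]

noncomputable def commKernel (σ : ℝ) (ξ η : ℤ) : ℝ :=
  jap (ξ - η) ^ σ / jap η ^ (σ + 1) * ((Int.sign ξ - Int.sign (ξ - η) : ℤ) : ℝ)

theorem abs_commKernel_le {σ : ℝ} (hσ : 0 ≤ σ) (ξ η : ℤ) :
    |commKernel σ ξ η| ≤ 2 * (jap η)⁻¹ := by
  have hη := jap_pos η
  by_cases hs : Int.sign ξ = Int.sign (ξ - η)
  · simp [commKernel, hs, hη.le]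
  have hfrac : jap (ξ - η) ^ σ / jap η ^ (σ + 1) ≤ (jap η)⁻¹ :=
    calc jap (ξ - η) ^ σ / jap η ^ (σ + 1)
        ≤ jap η ^ σ / jap η ^ (σ + 1) := by
          gcongr
          exacts [(jap_pos _).le, jap_le_jap (abs_sub_le_abs_of_sign_ne hs)]
      _ = (jap η)⁻¹ := by
          rw [Real.rpow_add_one hη.ne', div_mul_eq_div_div, div_self (by positivity), one_div]
  have hsign : |((Int.sign ξ - Int.sign (ξ - η) : ℤ) : ℝ)| ≤ 2 := by
    exact_mod_cast abs_sign_sub_sign_le ξ (ξ - η)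
  rw [commKernel, abs_mul, abs_of_nonneg (by have := (jap_pos (ξ - η)).le; positivity), mul_comm 2]
  exact mul_le_mul hfrac hsign (abs_nonneg _) (inv_nonneg.mpr hη.le)

theorem enorm_commKernel_le {σ : ℝ} (hσ : 0 ≤ σ) (ξ η : ℤ) :
    ‖commKernel σ ξ η‖ₑ ≤ 2 * ‖(jap η)⁻¹‖ₑ := by
  rw [← ofReal_norm, ← ofReal_norm, ← ENNReal.ofReal_ofNat 2, ← ENNReal.ofReal_mul zero_le_two]
  refine ENNReal.ofReal_le_ofReal ?_
  rw [Real.norm_eq_abs, Real.norm_of_nonneg (inv_nonneg.mpr (jap_pos η).le)]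
  exact abs_commKernel_le hσ ξ η

namespace ENNReal

theorem tsum_mul_sq_le_sq_mul_sq {ι : Type*} (f g : ι → ℝ≥0∞) :
    (∑' i, f i * g i) ^ 2 ≤ (∑' i, f i ^ 2) * ∑' i, g i ^ 2 := by
  rw [ENNReal.tsum_eq_iSup_sum, ENNReal.iSup_pow]
  refine iSup_le fun s => ?_
  calc (∑ i ∈ s, f i * g i) ^ 2
      ≤ ((∑ i ∈ s, f i ^ (2 : ℝ)) ^ (1 / 2 : ℝ) * (∑ i ∈ s, g i ^ (2 : ℝ)) ^ (1 / 2 : ℝ)) ^ 2 :=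
        pow_le_pow_left' (inner_le_Lp_mul_Lq s f g .two_two) 2
    _ = (∑ i ∈ s, f i ^ 2) * ∑ i ∈ s, g i ^ 2 := by
        simp only [← rpow_natCast, mul_rpow_of_nonneg _ _ (by norm_num : (0 : ℝ) ≤ (2 : ℕ)),
          ← rpow_mul]
        norm_num
    _ ≤ _ := mul_le_mul' (ENNReal.sum_le_tsum s) (ENNReal.sum_le_tsum s)

theorem tsum_tsum_mul_sub {G : Type*} [AddGroup G] (f g : G → ℝ≥0∞) :
    ∑' x, ∑' y, f y * g (x - y) = (∑' y, f y) * ∑' x, g x := by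
  rw [ENNReal.tsum_comm, ← ENNReal.tsum_mul_right]
  refine tsum_congr fun y => ?_
  rw [ENNReal.tsum_mul_left]
  exact congrArg _ ((Equiv.subRight y).tsum_eq g)

end ENNReal

theorem tsum_enorm_tsum_mul_sub_sq_le {G 𝕜 : Type*} [AddGroup G] [NormedDivisionRing 𝕜]
    (K : G → G → 𝕜) (a : G → ℝ≥0∞) (hK : ∀ x y, ‖K x y‖ₑ ≤ a y) (u v : G → 𝕜) :
    ∑' x, ‖∑' y, K x y * u y * v (x - y)‖ₑ ^ 2
      ≤ (∑' y, a y ^ 2) * (∑' y, ‖u y‖ₑ ^ 2) * ∑' x, ‖v x‖ₑ ^ 2 := by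
  have pointwise (x : G) : ‖∑' y, K x y * u y * v (x - y)‖ₑ ^ 2
      ≤ (∑' y, a y ^ 2) * ∑' y, ‖u y‖ₑ ^ 2 * ‖v (x - y)‖ₑ ^ 2 :=
    calc ‖∑' y, K x y * u y * v (x - y)‖ₑ ^ 2
        ≤ (∑' y, a y * (‖u y‖ₑ * ‖v (x - y)‖ₑ)) ^ 2 := by
          gcongr
          refine enorm_tsum_le_tsum_enorm.trans (ENNReal.tsum_le_tsum fun y => ?_)
          rw [enorm_mul, enorm_mul, mul_assoc]
          gcongr
          exact hK x y
      _ ≤ _ := (ENNReal.tsum_mul_sq_le_sq_mul_sq a fun y => ‖u y‖ₑ * ‖v (x - y)‖ₑ).trans_eq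
          (by simp only [mul_pow])
  calc ∑' x, ‖∑' y, K x y * u y * v (x - y)‖ₑ ^ 2
      ≤ ∑' x, (∑' y, a y ^ 2) * ∑' y, ‖u y‖ₑ ^ 2 * ‖v (x - y)‖ₑ ^ 2 :=
        ENNReal.tsum_le_tsum pointwise
    _ = _ := by
        rw [ENNReal.tsum_mul_left, ENNReal.tsum_tsum_mul_sub (‖u ·‖ₑ ^ 2) (‖v ·‖ₑ ^ 2), mul_assoc]

section SquareSums

variable {ι E : Type*} [SeminormedAddGroup E] {f : ι → E}

theorem ofReal_tsum_norm_sq (hf : Summable fun i => ‖f i‖ ^ 2) :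
    ENNReal.ofReal (∑' i, ‖f i‖ ^ 2) = ∑' i, ‖f i‖ₑ ^ 2 := by
  rw [ENNReal.ofReal_tsum_of_nonneg (fun i => by positivity) hf]
  simp only [ENNReal.ofReal_pow (norm_nonneg _), ofReal_norm]

theorem tsum_norm_sq_le_of_tsum_enorm_sq_le {B : ℝ} (hB : 0 ≤ B)
    (h : ∑' i, ‖f i‖ₑ ^ 2 ≤ ENNReal.ofReal B) : ∑' i, ‖f i‖ ^ 2 ≤ B := by
  have h_toReal : ∑' i, ‖f i‖ ^ 2 = (∑' i, ‖f i‖ₑ ^ 2).toReal := by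
    rw [ENNReal.tsum_toReal_eq fun i => by simp]
    simp
  rw [h_toReal]
  exact ENNReal.toReal_le_of_le_ofReal hB h

end SquareSums

/-- The commutator-type `ℓ²`-convolution bound: for `σ ≥ 0` and `u, v ∈ ℓ²(ℤ)`,
`‖ ∑_{ξ₁+ξ₂=ξ} ⟨ξ₂⟩^σ / ⟨ξ₁⟩^{σ+1} (sgn ξ − sgn ξ₂) u(ξ₁) v(ξ₂) ‖_{ℓ²_ξ}
  ≤ C ‖u‖_{ℓ²} ‖v‖_{ℓ²}` for a constant `C = C(σ) > 0`. -/
theorem stmt2 (σ : ℝ) (hσ : 0 ≤ σ) : ∃ C > 0, ∀ u v : ℤ → ℂ,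
    Summable (fun ξ : ℤ => ‖u ξ‖ ^ 2) → Summable (fun ξ : ℤ => ‖v ξ‖ ^ 2) →
    (∑' ξ : ℤ, ‖∑' ξ₁ : ℤ,
        (((jap (ξ - ξ₁) ^ σ / jap ξ₁ ^ (σ + 1))
            * ((Int.sign ξ - Int.sign (ξ - ξ₁) : ℤ) : ℝ) : ℝ) : ℂ)
          * u ξ₁ * v (ξ - ξ₁)‖ ^ 2) ^ ((1:ℝ)/2)
      ≤ C * (∑' ξ : ℤ, ‖u ξ‖ ^ 2) ^ ((1:ℝ)/2) * (∑' ξ : ℤ, ‖v ξ‖ ^ 2) ^ ((1:ℝ)/2) := by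
  set J := ∑' ξ : ℤ, ‖(jap ξ)⁻¹‖ ^ 2
  have hJ : 0 < J := summable_norm_inv_jap_sq.tsum_pos (fun _ => by positivity) 0 (by simp [jap])
  refine ⟨2 * √J, by positivity, fun u v hu hv => ?_⟩
  have key : ∑' ξ : ℤ, ‖∑' η : ℤ, ((commKernel σ ξ η : ℝ) : ℂ) * u η * v (ξ - η)‖ ^ 2
      ≤ 4 * J * (∑' ξ : ℤ, ‖u ξ‖ ^ 2) * ∑' ξ : ℤ, ‖v ξ‖ ^ 2 := by
    refine tsum_norm_sq_le_of_tsum_enorm_sq_le (by positivity) ?_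
    calc _ ≤ (∑' η : ℤ, (2 * ‖(jap η)⁻¹‖ₑ) ^ 2) * (∑' η, ‖u η‖ₑ ^ 2) * ∑' ξ, ‖v ξ‖ₑ ^ 2 :=
          tsum_enorm_tsum_mul_sub_sq_le _ _ (fun ξ η => by
            rw [← ofReal_norm, Complex.norm_real, ofReal_norm]
            exact enorm_commKernel_le hσ ξ η) u v
      _ = _ := by
          simp only [mul_pow, ENNReal.tsum_mul_left, ← ofReal_tsum_norm_sq hu,
            ← ofReal_tsum_norm_sq hv, ← ofReal_tsum_norm_sq summable_norm_inv_jap_sq]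
          rw [ENNReal.ofReal_mul (by positivity), ENNReal.ofReal_mul (by positivity),
            ENNReal.ofReal_mul zero_le_four, ENNReal.ofReal_ofNat]
          norm_num [J]
  rw [← Real.sqrt_eq_rpow, ← Real.sqrt_eq_rpow, ← Real.sqrt_eq_rpow]
  calc _ ≤ √(4 * J * (∑' ξ : ℤ, ‖u ξ‖ ^ 2) * ∑' ξ : ℤ, ‖v ξ‖ ^ 2) := Real.sqrt_le_sqrt key
    _ = _ := by
      rw [Real.sqrt_mul (by positivity), Real.sqrt_mul (by positivity), Real.sqrt_mul zero_le_four,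
        show (4 : ℝ) = 2 ^ 2 by norm_num, Real.sqrt_sq zero_le_two]
end

section
/- For every $s > 1/2$ there is a constant $C_s > 0$ such that for all $f, g \in H^s(\mathbb{T})$, $\|f\,\partial_x g\|_{H^{s-1}(\mathbb{T})} \le C_s\big( \|f\|_{H^{1/2+\varepsilon}}\|g\|_{H^s} + \|f\|_{H^s}\|g\|_{H^{1/2+\varepsilon}} \big)$ for any fixed $\varepsilon$ with $0 < \varepsilon < s - 1/2$. -/
open scoped ENNReal
open MeasureTheory

lemma enn_cs (f g : ℤ → ℝ≥0∞) :
    (∑' i, f i * g i) ^ 2 ≤ (∑' i, (f i) ^ 2) * (∑' i, (g i) ^ 2) := by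
  have h := ENNReal.lintegral_mul_le_Lp_mul_Lq (Measure.count : Measure ℤ)
    (p := 2) (q := 2) ⟨by norm_num, by norm_num, by norm_num⟩ (measurable_of_countable f).aemeasurable
    (measurable_of_countable g).aemeasurable
  simp only [lintegral_count, Pi.mul_apply] at h
  calc (∑' i, f i * g i) ^ 2
      ≤ ((∑' a, f a ^ (2:ℝ)) ^ ((2:ℝ)⁻¹) * (∑' a, g a ^ (2:ℝ)) ^ ((2:ℝ)⁻¹)) ^ 2 := by
        gcongr
        · convert h using 3 <;> norm_num
    _ = (∑' i, (f i) ^ 2) * (∑' i, (g i) ^ 2) := by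
        rw [mul_pow, ← ENNReal.rpow_natCast (_ ^ ((2:ℝ)⁻¹)) 2,
            ← ENNReal.rpow_natCast (_ ^ ((2:ℝ)⁻¹)) 2, ← ENNReal.rpow_mul, ← ENNReal.rpow_mul]
        norm_num

lemma shift_tsum (U : ℤ → ℝ≥0∞) (η : ℤ) : ∑' ξ : ℤ, U (ξ - η) = ∑' ξ, U ξ :=
  (Equiv.subRight η).tsum_eq U

lemma shift_tsum' (U : ℤ → ℝ≥0∞) (ξ : ℤ) : ∑' ξ₂ : ℤ, U (ξ - ξ₂) = ∑' ξ, U ξ :=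
  (Equiv.subLeft ξ).tsum_eq U

lemma schurA (K : ℤ → ℤ → ℝ≥0∞) (U V : ℤ → ℝ≥0∞) (M : ℝ≥0∞)
    (hK : ∀ ξ, ∑' ξ₂, (K ξ ξ₂) ^ 2 ≤ M) :
    ∑' ξ : ℤ, (∑' ξ₂ : ℤ, K ξ ξ₂ * U (ξ - ξ₂) * V ξ₂) ^ 2
      ≤ M * (∑' ξ, (U ξ) ^ 2) * (∑' ξ, (V ξ) ^ 2) := by
  have step1 : ∀ ξ, (∑' ξ₂ : ℤ, K ξ ξ₂ * U (ξ - ξ₂) * V ξ₂) ^ 2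
      ≤ M * ∑' ξ₂, (U (ξ - ξ₂)) ^ 2 * (V ξ₂) ^ 2 := by
    intro ξ
    calc (∑' ξ₂ : ℤ, K ξ ξ₂ * U (ξ - ξ₂) * V ξ₂) ^ 2
        = (∑' ξ₂ : ℤ, K ξ ξ₂ * (U (ξ - ξ₂) * V ξ₂)) ^ 2 := by
          congr 1; exact tsum_congr fun ξ₂ => by ring
      _ ≤ (∑' ξ₂, (K ξ ξ₂) ^ 2) * (∑' ξ₂, (U (ξ - ξ₂) * V ξ₂) ^ 2) := enn_cs _ _
      _ ≤ M * ∑' ξ₂, (U (ξ - ξ₂)) ^ 2 * (V ξ₂) ^ 2 := by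
          gcongr with ξ₂
          · exact hK ξ
          · rw [mul_pow]
  calc ∑' ξ : ℤ, (∑' ξ₂ : ℤ, K ξ ξ₂ * U (ξ - ξ₂) * V ξ₂) ^ 2
      ≤ ∑' ξ : ℤ, M * ∑' ξ₂, (U (ξ - ξ₂)) ^ 2 * (V ξ₂) ^ 2 := Summable.tsum_le_tsum step1 ENNReal.summable ENNReal.summable
    _ = M * ∑' ξ₂ : ℤ, ∑' ξ : ℤ, (U (ξ - ξ₂)) ^ 2 * (V ξ₂) ^ 2 := by
        rw [ENNReal.tsum_mul_left, ENNReal.tsum_comm]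
    _ = M * ∑' ξ₂ : ℤ, (∑' ξ, (U ξ) ^ 2) * (V ξ₂) ^ 2 := by
        congr 1; refine tsum_congr fun ξ₂ => ?_
        rw [ENNReal.tsum_mul_right, shift_tsum (fun ξ => (U ξ) ^ 2) ξ₂]
    _ = M * (∑' ξ, (U ξ) ^ 2) * (∑' ξ, (V ξ) ^ 2) := by
        rw [ENNReal.tsum_mul_left, mul_assoc]

lemma schurB (K : ℤ → ℤ → ℝ≥0∞) (U V : ℤ → ℝ≥0∞) (M : ℝ≥0∞)
    (hK : ∀ ξ₂, ∑' ξ, (K ξ ξ₂) ^ 2 ≤ M) :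
    ∑' ξ : ℤ, (∑' ξ₂ : ℤ, K ξ ξ₂ * U (ξ - ξ₂) * V ξ₂) ^ 2
      ≤ M * (∑' ξ, (U ξ) ^ 2) * (∑' ξ, (V ξ) ^ 2) := by
  have step1 : ∀ ξ, (∑' ξ₂ : ℤ, K ξ ξ₂ * U (ξ - ξ₂) * V ξ₂) ^ 2
      ≤ (∑' ξ₂, (K ξ ξ₂) ^ 2 * (V ξ₂) ^ 2) * ∑' ξ, (U ξ) ^ 2 := by
    intro ξ
    calc (∑' ξ₂ : ℤ, K ξ ξ₂ * U (ξ - ξ₂) * V ξ₂) ^ 2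
        = (∑' ξ₂ : ℤ, (K ξ ξ₂ * V ξ₂) * U (ξ - ξ₂)) ^ 2 := by
          congr 1; exact tsum_congr fun ξ₂ => by ring
      _ ≤ (∑' ξ₂, (K ξ ξ₂ * V ξ₂) ^ 2) * (∑' ξ₂, (U (ξ - ξ₂)) ^ 2) := enn_cs _ _
      _ = (∑' ξ₂, (K ξ ξ₂) ^ 2 * (V ξ₂) ^ 2) * ∑' ξ, (U ξ) ^ 2 := by
          rw [shift_tsum' (fun ξ => (U ξ) ^ 2) ξ]
          congr 1; exact tsum_congr fun ξ₂ => by rw [mul_pow]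
  calc ∑' ξ : ℤ, (∑' ξ₂ : ℤ, K ξ ξ₂ * U (ξ - ξ₂) * V ξ₂) ^ 2
      ≤ ∑' ξ : ℤ, (∑' ξ₂, (K ξ ξ₂) ^ 2 * (V ξ₂) ^ 2) * ∑' ξ, (U ξ) ^ 2 :=
        Summable.tsum_le_tsum step1 ENNReal.summable ENNReal.summable
    _ = (∑' ξ₂ : ℤ, ∑' ξ : ℤ, (K ξ ξ₂) ^ 2 * (V ξ₂) ^ 2) * ∑' ξ, (U ξ) ^ 2 := by
        rw [ENNReal.tsum_mul_right, ENNReal.tsum_comm]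
    _ ≤ (∑' ξ₂ : ℤ, M * (V ξ₂) ^ 2) * ∑' ξ, (U ξ) ^ 2 := by
        gcongr with ξ₂
        rw [ENNReal.tsum_mul_right]
        gcongr
        exact hK ξ₂
    _ = M * (∑' ξ, (U ξ) ^ 2) * (∑' ξ, (V ξ) ^ 2) := by
        rw [ENNReal.tsum_mul_left]; ring

abbrev Jr (ξ : ℤ) : ℝ := 1 + (ξ:ℝ)^2

lemma Jr_pos (ξ : ℤ) : 0 < Jr ξ := by unfold Jr; positivity
lemma Jr_one_le (ξ : ℤ) : 1 ≤ Jr ξ := by unfold Jr; nlinarith [sq_nonneg ((ξ:ℝ))]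

lemma rpow_sq {x : ℝ} (hx : 0 ≤ x) (y : ℝ) : (x ^ y) ^ 2 = x ^ (2*y) := by
  rw [← Real.rpow_natCast (x ^ y) 2, ← Real.rpow_mul hx]
  norm_num
  rw [mul_comm]

lemma rpow_ratio_le {x y A : ℝ} (hx : 0 < x) (hy : 0 < y) (hA : 1 ≤ A)
    (h1 : x ≤ A * y) (h2 : y ≤ A * x) (r : ℝ) : x ^ r ≤ A ^ |r| * y ^ r := by
  have hA0 : (0:ℝ) < A := lt_of_lt_of_le one_pos hA
  rcases le_or_gt 0 r with hr | hr
  · rw [abs_of_nonneg hr]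
    calc x ^ r ≤ (A * y) ^ r := Real.rpow_le_rpow hx.le h1 hr
      _ = A ^ r * y ^ r := Real.mul_rpow hA0.le hy.le
  · rw [abs_of_neg hr]
    have h3 : y / A ≤ x := by rw [div_le_iff₀ hA0]; linarith [h2, mul_comm x A]
    calc x ^ r ≤ (y / A) ^ r :=
          Real.rpow_le_rpow_of_nonpos (by positivity) h3 hr.le
      _ = y ^ r / A ^ r := Real.div_rpow hy.le hA0.le r
      _ = A ^ (-r) * y ^ r := by rw [Real.rpow_neg hA0.le]; ring

-- summability of (1+n^2)^(-(1/2+p)) for p > 0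
lemma sumZ {p : ℝ} (hp : 0 < p) :
    Summable (fun n : ℤ => Jr n ^ (-(1/2 + p))) := by
  have hb : 1 < 1 + 2*p := by linarith
  have hsum : Summable (fun n : ℤ => |(n:ℝ)| ^ (-(1+2*p)) + (if n = 0 then (1:ℝ) else 0)) := by
    refine (Real.summable_abs_int_rpow hb).add ?_
    exact summable_of_ne_finset_zero (s := {0}) (fun n hn => by
      simp only [Finset.mem_singleton] at hn; simp [hn])
  refine Summable.of_nonneg_of_le (fun n => Real.rpow_nonneg (Jr_pos n).le _) (fun n => ?_) hsum
  rcases eq_or_ne n 0 with h0 | h0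
  · subst h0
    show Jr 0 ^ (-(1/2+p)) ≤ |((0:ℤ):ℝ)| ^ (-(1+2*p)) + (if (0:ℤ) = 0 then (1:ℝ) else 0)
    rw [if_pos rfl]
    have h1 : Jr 0 = 1 := by simp [Jr]
    rw [h1, Real.one_rpow, show |((0:ℤ):ℝ)| = 0 by simp, Real.zero_rpow (by linarith)]
    norm_num
  · have hn1 : (1:ℝ) ≤ |(n:ℝ)| := by
      have : (1:ℤ) ≤ |n| := Int.one_le_abs (by exact_mod_cast h0)
      calc (1:ℝ) ≤ (|n| : ℤ) := by exact_mod_cast this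
        _ = |(n:ℝ)| := by push_cast; ring
    have h1 : |(n:ℝ)| ^ (2:ℕ) ≤ Jr n := by
      rw [sq_abs]; unfold Jr; nlinarith
    have : Jr n ^ (-(1/2 + p)) ≤ (|(n:ℝ)| ^ (2:ℕ)) ^ (-(1/2+p)) :=
      Real.rpow_le_rpow_of_nonpos (by positivity) h1 (by linarith)
    calc Jr n ^ (-(1/2 + p)) ≤ (|(n:ℝ)| ^ (2:ℕ)) ^ (-(1/2+p)) := this
      _ = |(n:ℝ)| ^ (-(1+2*p)) := by
          rw [← Real.rpow_natCast |(n:ℝ)| 2, ← Real.rpow_mul (abs_nonneg _)]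
          norm_num; ring_nf
      _ ≤ |(n:ℝ)| ^ (-(1+2*p)) + (if n = 0 then (1:ℝ) else 0) := by
          simp [h0]

lemma trade {x y A : ℝ} (hx : 0 < x) (hy : 0 < y) (hA : 1 ≤ A) (h : y ≤ A * x)
    {e : ℝ} (he : 0 ≤ e) (he1 : e ≤ 1) : x ^ (-e) ≤ A * y ^ (-e) := by
  have hA0 : (0:ℝ) < A := lt_of_lt_of_le one_pos hA
  have h1 : y / A ≤ x := by rw [div_le_iff₀ hA0]; linarith [mul_comm x A]
  calc x ^ (-e) ≤ (y / A) ^ (-e) :=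
        Real.rpow_le_rpow_of_nonpos (by positivity) h1 (neg_nonpos.2 he)
    _ = A ^ e * y ^ (-e) := by
        rw [Real.div_rpow hy.le hA0.le, Real.rpow_neg hy.le, Real.rpow_neg hA0.le,
          div_eq_mul_inv, inv_inv, mul_comm]
    _ ≤ A ^ (1:ℝ) * y ^ (-e) :=
        mul_le_mul_of_nonneg_right (Real.rpow_le_rpow_of_exponent_le hA he1)
          (Real.rpow_nonneg hy.le _)
    _ = A * y ^ (-e) := by rw [Real.rpow_one]

lemma grow {x y A r A' : ℝ} (hx : 0 ≤ x) (hy : 0 ≤ y) (hA : 1 ≤ A) (h : x ≤ A * y)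
    (hr : 0 ≤ r) (hr1 : r ≤ 1) : x ^ r ≤ A * y ^ r := by
  have hA0 : (0:ℝ) < A := lt_of_lt_of_le one_pos hA
  calc x ^ r ≤ (A * y) ^ r := Real.rpow_le_rpow hx h hr
    _ = A ^ r * y ^ r := Real.mul_rpow hA0.le hy
    _ ≤ A ^ (1:ℝ) * y ^ r :=
        mul_le_mul_of_nonneg_right (Real.rpow_le_rpow_of_exponent_le hA hr1)
          (Real.rpow_nonneg hy _)
    _ = A * y ^ r := by rw [Real.rpow_one]


lemma kernelA_pt (s ε : ℝ) (a c : ℝ) (hreg : 2 * |a - c| < |c|) :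
    (1+a^2) ^ (s-1) * c^2 * (1+(a-c)^2) ^ (-(1/2+ε)) * (1+c^2) ^ (-s)
      ≤ (4:ℝ) ^ |s-1| * (1+(a-c)^2) ^ (-(1/2+ε)) := by
  have habs : |a| ≤ |a - c| + |c| := by
    calc |a| = |(a-c) + c| := by ring_nf
      _ ≤ |a-c| + |c| := abs_add_le _ _
  have habs2 : |c| ≤ |a - c| + |a| := by
    calc |c| = |(c - a) + a| := by ring_nf
      _ ≤ |c-a| + |a| := abs_add_le _ _
      _ = |a-c| + |a| := by rw [abs_sub_comm]
  have h2a : 1+c^2 ≤ 4 * (1+a^2) := by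
    have h3 : |c| ≤ 2 * |a| := by linarith
    nlinarith [mul_self_le_mul_self (abs_nonneg c) h3, sq_abs c, sq_abs a]
  have h2b : 1+a^2 ≤ 4 * (1+c^2) := by
    have h3 : |a| ≤ (3/2) * |c| := by linarith
    nlinarith [mul_self_le_mul_self (abs_nonneg a) h3, sq_abs c, sq_abs a]
  have key : (1+a^2) ^ (s-1) * c^2 * (1+c^2) ^ (-s) ≤ (4:ℝ) ^ |s-1| := by
    calc (1+a^2) ^ (s-1) * c^2 * (1+c^2) ^ (-s)
        ≤ ((4:ℝ) ^ |s-1| * (1+c^2) ^ (s-1)) * (1+c^2) ^ (1:ℝ) * (1+c^2) ^ (-s) := by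
          have e1 : (1+a^2) ^ (s-1) ≤ (4:ℝ) ^ |s-1| * (1+c^2) ^ (s-1) :=
            rpow_ratio_le (by positivity) (by positivity) (by norm_num) h2b h2a (s-1)
          have e2 : c^2 ≤ (1+c^2) ^ (1:ℝ) := by rw [Real.rpow_one]; linarith [sq_nonneg c]
          apply mul_le_mul_of_nonneg_right _ (Real.rpow_nonneg (by positivity) (-s))
          exact mul_le_mul e1 e2 (sq_nonneg c) (by positivity)
      _ = (4:ℝ) ^ |s-1| * (1+c^2) ^ ((s-1) + 1 + (-s)) := by
          rw [Real.rpow_add (by positivity : (0:ℝ) < 1+c^2), Real.rpow_add (by positivity : (0:ℝ) < 1+c^2)]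
          ring
      _ = (4:ℝ) ^ |s-1| := by
          rw [show (s-1) + 1 + (-s) = 0 by ring, Real.rpow_zero, mul_one]
  calc (1+a^2) ^ (s-1) * c^2 * (1+(a-c)^2) ^ (-(1/2+ε)) * (1+c^2) ^ (-s)
      = ((1+a^2) ^ (s-1) * c^2 * (1+c^2) ^ (-s)) * (1+(a-c)^2) ^ (-(1/2+ε)) := by ring
    _ ≤ (4:ℝ) ^ |s-1| * (1+(a-c)^2) ^ (-(1/2+ε)) :=
        mul_le_mul_of_nonneg_right key (Real.rpow_nonneg (by positivity) _)

set_option maxHeartbeats 1600000 in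
lemma kernelB_pt (s ε δ : ℝ) (hs : 1/2 < s) (hε : 0 < ε)
    (hδ0 : 0 < δ) (hδε : δ ≤ ε) (hδ4 : δ ≤ 1/4) (hδs : δ ≤ (2*s-1)/4)
    (a c : ℝ) (hreg : |c| ≤ 2 * |a - c|) :
    (1+a^2) ^ (s-1) * c^2 * (1+(a-c)^2) ^ (-s) * (1+c^2) ^ (-(1/2+ε))
      ≤ (64 * ((9:ℝ) ^ (s-1) + 1)) *
        ((1+(a-c)^2) ^ (-(1/2+δ)) + (1+a^2) ^ (-(1/2+δ))) := by
  have hu : (0:ℝ) < 1+a^2 := by positivity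
  have hu1 : (0:ℝ) < 1+(a-c)^2 := by positivity
  have hu2 : (0:ℝ) < 1+c^2 := by positivity
  have hD1 : (0:ℝ) < 9 ^ (s-1) := by positivity
  have hu14 : 1+c^2 ≤ 4 * (1+(a-c)^2) := by
    nlinarith [mul_self_le_mul_self (abs_nonneg c) hreg, sq_abs c, sq_abs (a-c)]
  -- step 0 : absorb c^2 into (1+c^2)
  have step0 : (1+a^2) ^ (s-1) * c^2 * (1+(a-c)^2) ^ (-s) * (1+c^2) ^ (-(1/2+ε))
      ≤ (1+a^2) ^ (s-1) * (1+(a-c)^2) ^ (-s) * (1+c^2) ^ (1/2-ε) := by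
    have hc2 : c^2 * (1+c^2) ^ (-(1/2+ε)) ≤ (1+c^2) ^ (1/2-ε) := by
      calc c^2 * (1+c^2) ^ (-(1/2+ε))
          ≤ (1+c^2) ^ (1:ℝ) * (1+c^2) ^ (-(1/2+ε)) := by
            apply mul_le_mul_of_nonneg_right _ (Real.rpow_nonneg hu2.le _)
            rw [Real.rpow_one]; linarith [sq_nonneg c]
        _ = (1+c^2) ^ (1 + -(1/2+ε)) := (Real.rpow_add hu2 _ _).symm
        _ = (1+c^2) ^ (1/2-ε) := by rw [show 1 + -(1/2+ε) = 1/2-ε by ring]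
    calc (1+a^2) ^ (s-1) * c^2 * (1+(a-c)^2) ^ (-s) * (1+c^2) ^ (-(1/2+ε))
        = ((1+a^2) ^ (s-1) * (1+(a-c)^2) ^ (-s)) * (c^2 * (1+c^2) ^ (-(1/2+ε))) := by ring
      _ ≤ ((1+a^2) ^ (s-1) * (1+(a-c)^2) ^ (-s)) * (1+c^2) ^ (1/2-ε) := by
          apply mul_le_mul_of_nonneg_left hc2 (by positivity)
      _ = (1+a^2) ^ (s-1) * (1+(a-c)^2) ^ (-s) * (1+c^2) ^ (1/2-ε) := by ring
  refine le_trans step0 ?_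
  have husum : (0:ℝ) ≤ (1+(a-c)^2) ^ (-(1/2+δ)) + (1+a^2) ^ (-(1/2+δ)) := by positivity
  rcases le_or_gt 1 s with hs1 | hs1
  · -- Case A : 1 ≤ s
    have hu9 : 1+a^2 ≤ 9 * (1+(a-c)^2) := by
      have h3 : |a| ≤ 3 * |a-c| := by
        have : |a| ≤ |a-c| + |c| := by
          calc |a| = |(a-c) + c| := by ring_nf
            _ ≤ |a-c| + |c| := abs_add_le _ _
        linarith
      nlinarith [mul_self_le_mul_self (abs_nonneg a) h3, sq_abs a, sq_abs (a-c)]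
    have e1 : (1+a^2) ^ (s-1) ≤ 9 ^ (s-1) * (1+(a-c)^2) ^ (s-1) := by
      calc (1+a^2) ^ (s-1) ≤ (9 * (1+(a-c)^2)) ^ (s-1) :=
            Real.rpow_le_rpow hu.le hu9 (by linarith)
        _ = 9 ^ (s-1) * (1+(a-c)^2) ^ (s-1) := Real.mul_rpow (by norm_num) hu1.le
    have e2 : (1+(a-c)^2) ^ (-(1/2-δ)) ≤ 4 * (1+c^2) ^ (-(1/2-δ)) :=
      trade hu1 hu2 (by norm_num) hu14 (by linarith) (by linarith)
    calc (1+a^2) ^ (s-1) * (1+(a-c)^2) ^ (-s) * (1+c^2) ^ (1/2-ε)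
        ≤ (9 ^ (s-1) * (1+(a-c)^2) ^ (s-1)) * (1+(a-c)^2) ^ (-s) * (1+c^2) ^ (1/2-ε) := by
          apply mul_le_mul_of_nonneg_right _ (Real.rpow_nonneg hu2.le _)
          exact mul_le_mul_of_nonneg_right e1 (Real.rpow_nonneg hu1.le _)
      _ = 9 ^ (s-1) * ((1+(a-c)^2) ^ ((s-1) + -s)) * (1+c^2) ^ (1/2-ε) := by
          rw [Real.rpow_add hu1]; ring
      _ = 9 ^ (s-1) * ((1+(a-c)^2) ^ (-(1/2-δ)) * (1+(a-c)^2) ^ (-(1/2+δ))) * (1+c^2) ^ (1/2-ε) := by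
          rw [← Real.rpow_add hu1, show -(1/2-δ) + -(1/2+δ) = (s-1) + -s by ring]
      _ ≤ 9 ^ (s-1) * ((4 * (1+c^2) ^ (-(1/2-δ))) * (1+(a-c)^2) ^ (-(1/2+δ))) * (1+c^2) ^ (1/2-ε) := by
          apply mul_le_mul_of_nonneg_right _ (Real.rpow_nonneg hu2.le _)
          apply mul_le_mul_of_nonneg_left _ hD1.le
          exact mul_le_mul_of_nonneg_right e2 (Real.rpow_nonneg hu1.le _)
      _ = (9 ^ (s-1) * 4) * (1+(a-c)^2) ^ (-(1/2+δ)) * ((1+c^2) ^ (-(1/2-δ)) * (1+c^2) ^ (1/2-ε)) := by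
          ring
      _ = (9 ^ (s-1) * 4) * (1+(a-c)^2) ^ (-(1/2+δ)) * (1+c^2) ^ (δ-ε) := by
          rw [← Real.rpow_add hu2, show -(1/2-δ) + (1/2-ε) = δ-ε by ring]
      _ ≤ (9 ^ (s-1) * 4) * (1+(a-c)^2) ^ (-(1/2+δ)) * 1 := by
          apply mul_le_mul_of_nonneg_left _ (by positivity)
          exact Real.rpow_le_one_of_one_le_of_nonpos (by linarith [sq_nonneg c]) (by linarith)
      _ ≤ (64 * ((9:ℝ) ^ (s-1) + 1)) * ((1+(a-c)^2) ^ (-(1/2+δ)) + (1+a^2) ^ (-(1/2+δ))) := by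
          rw [mul_one]
          have h1 : (9:ℝ) ^ (s-1) * 4 ≤ 64 * ((9:ℝ) ^ (s-1) + 1) := by nlinarith
          have h2 : (1+(a-c)^2) ^ (-(1/2+δ)) ≤ (1+(a-c)^2) ^ (-(1/2+δ)) + (1+a^2) ^ (-(1/2+δ)) := by
            linarith [Real.rpow_nonneg hu.le (-(1/2+δ))]
          exact mul_le_mul h1 h2 (Real.rpow_nonneg hu1.le _) (by positivity)
  · rcases le_or_gt |c| (4 * |a|) with hc4 | hc4
    · -- Case B : s < 1, |c| ≤ 4|a|
      have hu16 : 1+c^2 ≤ 16 * (1+a^2) := by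
        nlinarith [mul_self_le_mul_self (abs_nonneg c) hc4, sq_abs c, sq_abs a]
      have e1 : (1+a^2) ^ (s-1) ≤ 16 * (1+c^2) ^ (s-1) := by
        have := trade hu hu2 (by norm_num : (1:ℝ) ≤ 16) hu16 (e := 1-s) (by linarith) (by linarith)
        rw [show -(1-s) = s-1 by ring] at this
        exact this
      have e2 : (1+(a-c)^2) ^ (-(s-1/2-δ)) ≤ 4 * (1+c^2) ^ (-(s-1/2-δ)) :=
        trade hu1 hu2 (by norm_num) hu14 (by linarith) (by linarith)
      calc (1+a^2) ^ (s-1) * (1+(a-c)^2) ^ (-s) * (1+c^2) ^ (1/2-ε)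
          ≤ (16 * (1+c^2) ^ (s-1)) * (1+(a-c)^2) ^ (-s) * (1+c^2) ^ (1/2-ε) := by
            apply mul_le_mul_of_nonneg_right _ (Real.rpow_nonneg hu2.le _)
            exact mul_le_mul_of_nonneg_right e1 (Real.rpow_nonneg hu1.le _)
        _ = (16 * (1+c^2) ^ (s-1)) * ((1+(a-c)^2) ^ (-(1/2+δ)) * (1+(a-c)^2) ^ (-(s-1/2-δ))) * (1+c^2) ^ (1/2-ε) := by
            rw [← Real.rpow_add hu1, show -(1/2+δ) + -(s-1/2-δ) = -s by ring]
        _ ≤ (16 * (1+c^2) ^ (s-1)) * ((1+(a-c)^2) ^ (-(1/2+δ)) * (4 * (1+c^2) ^ (-(s-1/2-δ)))) * (1+c^2) ^ (1/2-ε) := by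
            apply mul_le_mul_of_nonneg_right _ (Real.rpow_nonneg hu2.le _)
            apply mul_le_mul_of_nonneg_left _ (by positivity)
            exact mul_le_mul_of_nonneg_left e2 (Real.rpow_nonneg hu1.le _)
        _ = 64 * (1+(a-c)^2) ^ (-(1/2+δ)) * ((1+c^2) ^ (s-1) * (1+c^2) ^ (-(s-1/2-δ)) * (1+c^2) ^ (1/2-ε)) := by
            ring
        _ = 64 * (1+(a-c)^2) ^ (-(1/2+δ)) * (1+c^2) ^ (δ-ε) := by
            rw [← Real.rpow_add hu2, ← Real.rpow_add hu2,
              show (s-1) + -(s-1/2-δ) + (1/2-ε) = δ-ε by ring]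
        _ ≤ 64 * (1+(a-c)^2) ^ (-(1/2+δ)) * 1 := by
            apply mul_le_mul_of_nonneg_left _ (by positivity)
            exact Real.rpow_le_one_of_one_le_of_nonpos (by linarith [sq_nonneg c]) (by linarith)
        _ ≤ (64 * ((9:ℝ) ^ (s-1) + 1)) * ((1+(a-c)^2) ^ (-(1/2+δ)) + (1+a^2) ^ (-(1/2+δ))) := by
            rw [mul_one]
            have h1 : (64:ℝ) ≤ 64 * ((9:ℝ) ^ (s-1) + 1) := by nlinarith
            have h2 : (1+(a-c)^2) ^ (-(1/2+δ)) ≤ (1+(a-c)^2) ^ (-(1/2+δ)) + (1+a^2) ^ (-(1/2+δ)) := by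
              linarith [Real.rpow_nonneg hu.le (-(1/2+δ))]
            exact mul_le_mul h1 h2 (Real.rpow_nonneg hu1.le _) (by positivity)
    · -- Case C : s < 1, 4|a| < |c|
      have hua : 1+a^2 ≤ 1+c^2 := by
        nlinarith [mul_self_le_mul_self (abs_nonneg a) (le_of_lt (by linarith [abs_nonneg a] : |a| < |c|)),
          sq_abs a, sq_abs c]
      have hu14' : 1+c^2 ≤ 4 * (1+(a-c)^2) := hu14
      have e1 : (1+(a-c)^2) ^ (-s) ≤ 4 * (1+c^2) ^ (-s) := by
        have := trade hu1 hu2 (by norm_num) hu14' (e := s) (by linarith) (by linarith)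
        exact this
      have e2 : (1+a^2) ^ (s-1/2+δ) ≤ (1+c^2) ^ (s-1/2+δ) :=
        Real.rpow_le_rpow hu.le hua (by linarith)
      calc (1+a^2) ^ (s-1) * (1+(a-c)^2) ^ (-s) * (1+c^2) ^ (1/2-ε)
          = ((1+a^2) ^ (-(1/2+δ)) * (1+a^2) ^ (s-1/2+δ)) * (1+(a-c)^2) ^ (-s) * (1+c^2) ^ (1/2-ε) := by
            rw [← Real.rpow_add hu, show -(1/2+δ) + (s-1/2+δ) = s-1 by ring]
        _ ≤ ((1+a^2) ^ (-(1/2+δ)) * (1+c^2) ^ (s-1/2+δ)) * (4 * (1+c^2) ^ (-s)) * (1+c^2) ^ (1/2-ε) := by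
            apply mul_le_mul_of_nonneg_right _ (Real.rpow_nonneg hu2.le _)
            apply mul_le_mul _ e1 (Real.rpow_nonneg hu1.le _) (by positivity)
            exact mul_le_mul_of_nonneg_left e2 (Real.rpow_nonneg hu.le _)
        _ = 4 * (1+a^2) ^ (-(1/2+δ)) * ((1+c^2) ^ (s-1/2+δ) * (1+c^2) ^ (-s) * (1+c^2) ^ (1/2-ε)) := by
            ring
        _ = 4 * (1+a^2) ^ (-(1/2+δ)) * (1+c^2) ^ (δ-ε) := by
            rw [← Real.rpow_add hu2, ← Real.rpow_add hu2,
              show (s-1/2+δ) + -s + (1/2-ε) = δ-ε by ring]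
        _ ≤ 4 * (1+a^2) ^ (-(1/2+δ)) * 1 := by
            apply mul_le_mul_of_nonneg_left _ (by positivity)
            exact Real.rpow_le_one_of_one_le_of_nonpos (by linarith [sq_nonneg c]) (by linarith)
        _ ≤ (64 * ((9:ℝ) ^ (s-1) + 1)) * ((1+(a-c)^2) ^ (-(1/2+δ)) + (1+a^2) ^ (-(1/2+δ))) := by
            rw [mul_one]
            have h1 : (4:ℝ) ≤ 64 * ((9:ℝ) ^ (s-1) + 1) := by nlinarith
            have h2 : (1+a^2) ^ (-(1/2+δ)) ≤ (1+(a-c)^2) ^ (-(1/2+δ)) + (1+a^2) ^ (-(1/2+δ)) := by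
              linarith [Real.rpow_nonneg hu1.le (-(1/2+δ))]
            exact mul_le_mul h1 h2 (Real.rpow_nonneg hu.le _) (by positivity)
section helpers2
open scoped ENNReal

lemma sq_add_le_four (x y : ℝ≥0∞) : (x + y)^2 ≤ 4*(x^2 + y^2) := by
  have hxy : x*y ≤ x^2 + y^2 := by
    rcases le_total x y with h | h
    · calc x*y ≤ y*y := mul_le_mul_left h y
        _ = y^2 := (sq y).symm
        _ ≤ x^2+y^2 := le_add_self
    · calc x*y ≤ x*x := mul_le_mul_right h x
        _ = x^2 := (sq x).symm
        _ ≤ x^2+y^2 := le_self_add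
  calc (x+y)^2 = x^2 + (x*y + x*y) + y^2 := by ring
    _ ≤ x^2 + ((x^2+y^2) + (x^2+y^2)) + y^2 := by gcongr
    _ = 3*x^2 + 3*y^2 := by ring
    _ ≤ 4*x^2 + 4*y^2 := by gcongr <;> norm_num
    _ = 4*(x^2+y^2) := by ring

lemma enn_norm_tsum_le (f : ℤ → ℂ) :
    ENNReal.ofReal ‖∑' i, f i‖ ≤ ∑' i, ENNReal.ofReal ‖f i‖ := by
  by_cases h : Summable f
  · calc ENNReal.ofReal ‖∑' i, f i‖ ≤ ENNReal.ofReal (∑' i, ‖f i‖) :=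
        ENNReal.ofReal_le_ofReal (norm_tsum_le_tsum_norm (summable_norm_iff.mpr h))
      _ = ∑' i, ENNReal.ofReal ‖f i‖ :=
        ENNReal.ofReal_tsum_of_nonneg (fun i => norm_nonneg _) (summable_norm_iff.mpr h)
  · rw [tsum_eq_zero_of_not_summable h]; simp

end helpers2
open Complex

open scoped ENNReal

/-- The squared `H^σ` norm of a Fourier coefficient sequence. -/
noncomputable def Hsq (σ : ℝ) (a : ℤ → ℂ) : ℝ :=
  ∑' ξ : ℤ, (1 + (ξ : ℝ) ^ 2) ^ σ * ‖a ξ‖ ^ 2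

/-- Fourier coefficients of the product `f ∂_x g`, via the convolution
`(f ∂_x g)^(ξ) = (2π)^{-1/2} ∑_{ξ₁+ξ₂=ξ} f̂(ξ₁) (iξ₂) ĝ(ξ₂)`. -/
noncomputable def prodDx (a b : ℤ → ℂ) (ξ : ℤ) : ℂ :=
  (1 / (Real.sqrt (2 * Real.pi) : ℂ)) *
    ∑' ξ₂ : ℤ, a (ξ - ξ₂) * (Complex.I * (ξ₂ : ℂ)) * b ξ₂

set_option maxHeartbeats 4000000 in
/-- For every `s > 1/2` and `0 < ε < s - 1/2` there is `C_s > 0` such that for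
`f, g ∈ H^s(𝕋)` (with Fourier coefficients `a, b`),
`‖f ∂_x g‖_{H^{s-1}} ≤ C_s (‖f‖_{H^{1/2+ε}} ‖g‖_{H^s} + ‖f‖_{H^s} ‖g‖_{H^{1/2+ε}})`. -/
theorem stmt17 (s : ℝ) (hs : 1/2 < s) (ε : ℝ) (hε : 0 < ε) (hεs : ε < s - 1/2) :
    ∃ C > 0, ∀ a b : ℤ → ℂ,
      Summable (fun ξ : ℤ => (1 + (ξ : ℝ) ^ 2) ^ s * ‖a ξ‖ ^ 2) →
      Summable (fun ξ : ℤ => (1 + (ξ : ℝ) ^ 2) ^ s * ‖b ξ‖ ^ 2) →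
      (Hsq (s - 1) (prodDx a b)) ^ ((1:ℝ)/2)
        ≤ C * ((Hsq (1/2 + ε) a) ^ ((1:ℝ)/2) * (Hsq s b) ^ ((1:ℝ)/2)
            + (Hsq s a) ^ ((1:ℝ)/2) * (Hsq (1/2 + ε) b) ^ ((1:ℝ)/2)) := by
  classical
  have hH : ∀ (σ : ℝ) (f : ℤ → ℂ), Hsq σ f = ∑' ξ : ℤ, Jr ξ ^ σ * ‖f ξ‖ ^ 2 :=
    fun σ f => rfl
  set t : ℝ := 1/2 + ε with ht
  have hts : t < s := by rw [ht]; linarith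
  set δ : ℝ := min ε (min (1/4) ((2*s-1)/4)) with hδdef
  have hδ0 : 0 < δ := lt_min hε (lt_min (by norm_num) (by linarith))
  have hδε : δ ≤ ε := min_le_left _ _
  have hδ4 : δ ≤ 1/4 := le_trans (min_le_right _ _) (min_le_left _ _)
  have hδs : δ ≤ (2*s-1)/4 := le_trans (min_le_right _ _) (min_le_right _ _)
  have hsumZ1 : Summable (fun n : ℤ => Jr n ^ (-(1/2+ε))) := sumZ hε
  have hsumZ2 : Summable (fun n : ℤ => Jr n ^ (-(1/2+δ))) := sumZ hδ0
  set Z1 : ℝ := ∑' n : ℤ, Jr n ^ (-(1/2+ε)) with hZ1def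
  set Z2 : ℝ := ∑' n : ℤ, Jr n ^ (-(1/2+δ)) with hZ2def
  have hZ1 : 0 ≤ Z1 := tsum_nonneg fun n => Real.rpow_nonneg (Jr_pos n).le _
  have hZ2 : 0 ≤ Z2 := tsum_nonneg fun n => Real.rpow_nonneg (Jr_pos n).le _
  have hCA : (0:ℝ) ≤ (4:ℝ) ^ |s-1| := Real.rpow_nonneg (by norm_num) _
  have hCB : (0:ℝ) ≤ 64 * ((9:ℝ)^(s-1)+1) := by positivity
  set MA : ℝ := (4:ℝ) ^ |s-1| * Z1 with hMAdef
  set MB : ℝ := (64 * ((9:ℝ)^(s-1)+1)) * (2*Z2) with hMBdef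
  have hMA : 0 ≤ MA := mul_nonneg hCA hZ1
  have hMB : 0 ≤ MB := mul_nonneg hCB (by linarith)
  refine ⟨Real.sqrt (4*(MA+MB)) + 1, by positivity, fun a b ha hb => ?_⟩
  -- ENNReal-valued weighted sequences
  set A1 : ℤ → ℝ≥0∞ := fun ξ => ENNReal.ofReal (Jr ξ ^ (t/2) * ‖a ξ‖) with hA1def
  set As : ℤ → ℝ≥0∞ := fun ξ => ENNReal.ofReal (Jr ξ ^ (s/2) * ‖a ξ‖) with hAsdef
  set B1 : ℤ → ℝ≥0∞ := fun ξ => ENNReal.ofReal (Jr ξ ^ (t/2) * ‖b ξ‖) with hB1def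
  set Bs : ℤ → ℝ≥0∞ := fun ξ => ENNReal.ofReal (Jr ξ ^ (s/2) * ‖b ξ‖) with hBsdef
  -- real-valued kernels
  set KAr : ℤ → ℤ → ℝ := fun ξ ξ₂ =>
    if 2*|(ξ:ℝ)-(ξ₂:ℝ)| < |(ξ₂:ℝ)| then
      Jr ξ ^ ((s-1)/2) * |(ξ₂:ℝ)| * Jr (ξ-ξ₂) ^ (-(t/2)) * Jr ξ₂ ^ (-(s/2)) else 0
    with hKArdef
  set KBr : ℤ → ℤ → ℝ := fun ξ ξ₂ =>
    if 2*|(ξ:ℝ)-(ξ₂:ℝ)| < |(ξ₂:ℝ)| then 0 else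
      Jr ξ ^ ((s-1)/2) * |(ξ₂:ℝ)| * Jr (ξ-ξ₂) ^ (-(s/2)) * Jr ξ₂ ^ (-(t/2))
    with hKBrdef
  have hKArnn : ∀ ξ ξ₂, 0 ≤ KAr ξ ξ₂ := by
    intro ξ ξ₂; rw [hKArdef]; dsimp only
    split
    · positivity
    · exact le_rfl
  have hKBrnn : ∀ ξ ξ₂, 0 ≤ KBr ξ ξ₂ := by
    intro ξ ξ₂; rw [hKBrdef]; dsimp only
    split
    · exact le_rfl
    · positivity
  have hcast : ∀ ξ ξ₂ : ℤ, Jr (ξ-ξ₂) = 1 + ((ξ:ℝ)-(ξ₂:ℝ))^2 := by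
    intro ξ ξ₂; unfold Jr; push_cast; ring
  -- kernel ℓ² bounds
  have hKA : ∀ ξ, ∑' ξ₂, (ENNReal.ofReal (KAr ξ ξ₂))^2 ≤ ENNReal.ofReal MA := by
    intro ξ
    have hpt : ∀ ξ₂, (KAr ξ ξ₂)^2 ≤ (4:ℝ)^|s-1| * Jr (ξ-ξ₂) ^ (-(1/2+ε)) := by
      intro ξ₂
      rw [hKArdef]; dsimp only
      split
      · rename_i hc
        rw [mul_pow, mul_pow, mul_pow, rpow_sq (Jr_pos ξ).le, rpow_sq (Jr_pos (ξ-ξ₂)).le,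
          rpow_sq (Jr_pos ξ₂).le, _root_.sq_abs,
          show 2*((s-1)/2) = s-1 by ring, show 2*(-(t/2)) = -(1/2+ε) by rw [ht]; ring,
          show 2*(-(s/2)) = -s by ring]
        have := kernelA_pt s ε (ξ:ℝ) (ξ₂:ℝ) hc
        rw [hcast ξ ξ₂]
        calc (1+(ξ:ℝ)^2)^(s-1) * (ξ₂:ℝ)^2 * (1+((ξ:ℝ)-(ξ₂:ℝ))^2)^(-(1/2+ε)) * (1+(ξ₂:ℝ)^2)^(-s)
            ≤ (4:ℝ)^|s-1| * (1+((ξ:ℝ)-(ξ₂:ℝ))^2)^(-(1/2+ε)) := this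
          _ = (4:ℝ)^|s-1| * (1 + ((ξ:ℝ)-(ξ₂:ℝ))^2) ^ (-(1/2+ε)) := rfl
      · rw [zero_pow (by norm_num)]
        have h1 : (0:ℝ) ≤ Jr (ξ-ξ₂) ^ (-(1/2+ε)) := Real.rpow_nonneg (Jr_pos _).le _
        nlinarith [hCA]
    calc ∑' ξ₂, (ENNReal.ofReal (KAr ξ ξ₂))^2
        = ∑' ξ₂, ENNReal.ofReal ((KAr ξ ξ₂)^2) :=
          tsum_congr fun ξ₂ => (ENNReal.ofReal_pow (hKArnn ξ ξ₂) 2).symm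
      _ ≤ ∑' ξ₂, ENNReal.ofReal ((4:ℝ)^|s-1| * Jr (ξ-ξ₂) ^ (-(1/2+ε))) :=
          Summable.tsum_le_tsum (fun ξ₂ => ENNReal.ofReal_le_ofReal (hpt ξ₂))
            ENNReal.summable ENNReal.summable
      _ = ENNReal.ofReal ((4:ℝ)^|s-1|) * ∑' ξ₂, ENNReal.ofReal (Jr (ξ-ξ₂) ^ (-(1/2+ε))) := by
          rw [← ENNReal.tsum_mul_left]
          exact tsum_congr fun ξ₂ => ENNReal.ofReal_mul hCA
      _ = ENNReal.ofReal ((4:ℝ)^|s-1|) * ∑' n, ENNReal.ofReal (Jr n ^ (-(1/2+ε))) := by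
          rw [shift_tsum' (fun n => ENNReal.ofReal (Jr n ^ (-(1/2+ε)))) ξ]
      _ = ENNReal.ofReal ((4:ℝ)^|s-1|) * ENNReal.ofReal Z1 := by
          rw [hZ1def, ENNReal.ofReal_tsum_of_nonneg
            (fun n => Real.rpow_nonneg (Jr_pos n).le _) hsumZ1]
      _ = ENNReal.ofReal MA := by rw [hMAdef, ENNReal.ofReal_mul hCA]
  have hKB : ∀ ξ₂, ∑' ξ, (ENNReal.ofReal (KBr ξ ξ₂))^2 ≤ ENNReal.ofReal MB := by
    intro ξ₂
    have hpt : ∀ ξ, (KBr ξ ξ₂)^2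
        ≤ (64*((9:ℝ)^(s-1)+1)) * (Jr (ξ-ξ₂) ^ (-(1/2+δ)) + Jr ξ ^ (-(1/2+δ))) := by
      intro ξ
      rw [hKBrdef]; dsimp only
      split
      · rw [zero_pow (by norm_num)]
        have h1 : (0:ℝ) ≤ Jr (ξ-ξ₂) ^ (-(1/2+δ)) := Real.rpow_nonneg (Jr_pos _).le _
        have h2 : (0:ℝ) ≤ Jr ξ ^ (-(1/2+δ)) := Real.rpow_nonneg (Jr_pos _).le _
        nlinarith [hCB]
      · rename_i hc
        push_neg at hc
        rw [mul_pow, mul_pow, mul_pow, rpow_sq (Jr_pos ξ).le, rpow_sq (Jr_pos (ξ-ξ₂)).le,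
          rpow_sq (Jr_pos ξ₂).le, _root_.sq_abs,
          show 2*((s-1)/2) = s-1 by ring, show 2*(-(t/2)) = -(1/2+ε) by rw [ht]; ring,
          show 2*(-(s/2)) = -s by ring]
        have := kernelB_pt s ε δ hs hε hδ0 hδε hδ4 hδs (ξ:ℝ) (ξ₂:ℝ) hc
        rw [hcast ξ ξ₂]
        exact this
    calc ∑' ξ, (ENNReal.ofReal (KBr ξ ξ₂))^2
        = ∑' ξ, ENNReal.ofReal ((KBr ξ ξ₂)^2) :=
          tsum_congr fun ξ => (ENNReal.ofReal_pow (hKBrnn ξ ξ₂) 2).symm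
      _ ≤ ∑' ξ, ENNReal.ofReal ((64*((9:ℝ)^(s-1)+1)) *
            (Jr (ξ-ξ₂) ^ (-(1/2+δ)) + Jr ξ ^ (-(1/2+δ)))) :=
          Summable.tsum_le_tsum (fun ξ => ENNReal.ofReal_le_ofReal (hpt ξ))
            ENNReal.summable ENNReal.summable
      _ = ENNReal.ofReal (64*((9:ℝ)^(s-1)+1)) *
            ∑' ξ, (ENNReal.ofReal (Jr (ξ-ξ₂) ^ (-(1/2+δ))) + ENNReal.ofReal (Jr ξ ^ (-(1/2+δ)))) := by
          rw [← ENNReal.tsum_mul_left]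
          refine tsum_congr fun ξ => ?_
          rw [ENNReal.ofReal_mul hCB, ENNReal.ofReal_add
            (Real.rpow_nonneg (Jr_pos _).le _) (Real.rpow_nonneg (Jr_pos _).le _)]
      _ = ENNReal.ofReal (64*((9:ℝ)^(s-1)+1)) *
            (∑' ξ, ENNReal.ofReal (Jr (ξ-ξ₂) ^ (-(1/2+δ))) + ∑' ξ, ENNReal.ofReal (Jr ξ ^ (-(1/2+δ)))) := by
          rw [ENNReal.tsum_add]
      _ = ENNReal.ofReal (64*((9:ℝ)^(s-1)+1)) *
            (ENNReal.ofReal Z2 + ENNReal.ofReal Z2) := by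
          rw [shift_tsum (fun n => ENNReal.ofReal (Jr n ^ (-(1/2+δ)))) ξ₂,
            hZ2def, ENNReal.ofReal_tsum_of_nonneg
              (fun n => Real.rpow_nonneg (Jr_pos n).le _) hsumZ2]
      _ = ENNReal.ofReal MB := by
          rw [hMBdef, ENNReal.ofReal_mul hCB, ← ENNReal.ofReal_add (by linarith) (by linarith)]
          congr 1
          ring
  -- the two convolution pieces
  set SA : ℤ → ℝ≥0∞ := fun ξ => ∑' ξ₂, ENNReal.ofReal (KAr ξ ξ₂) * A1 (ξ-ξ₂) * Bs ξ₂ with hSAdef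
  set SB : ℤ → ℝ≥0∞ := fun ξ => ∑' ξ₂, ENNReal.ofReal (KBr ξ ξ₂) * As (ξ-ξ₂) * B1 ξ₂ with hSBdef
  -- pointwise splitting bound
  have hsplit : ∀ ξ, ENNReal.ofReal (Jr ξ ^ (s-1) * ‖prodDx a b ξ‖^2) ≤ (SA ξ + SB ξ)^2 := by
    intro ξ
    have hterm : ∀ ξ₂ : ℤ,
        ENNReal.ofReal (Jr ξ ^ ((s-1)/2)) * ENNReal.ofReal (‖a (ξ-ξ₂)‖ * (|(ξ₂:ℝ)| * ‖b ξ₂‖))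
          ≤ ENNReal.ofReal (KAr ξ ξ₂) * A1 (ξ-ξ₂) * Bs ξ₂
            + ENNReal.ofReal (KBr ξ ξ₂) * As (ξ-ξ₂) * B1 ξ₂ := by
      intro ξ₂
      by_cases hc : 2*|(ξ:ℝ)-(ξ₂:ℝ)| < |(ξ₂:ℝ)|
      · refine le_trans (le_of_eq ?_) le_self_add
        have hKAval : KAr ξ ξ₂
            = Jr ξ ^ ((s-1)/2) * |(ξ₂:ℝ)| * Jr (ξ-ξ₂) ^ (-(t/2)) * Jr ξ₂ ^ (-(s/2)) := by
          rw [hKArdef]; simp only [if_pos hc]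
        have c1 : Jr (ξ-ξ₂) ^ (-(t/2)) * Jr (ξ-ξ₂) ^ (t/2) = 1 := by
          rw [← Real.rpow_add (Jr_pos _)]; norm_num
        have c2 : Jr ξ₂ ^ (-(s/2)) * Jr ξ₂ ^ (s/2) = 1 := by
          rw [← Real.rpow_add (Jr_pos _)]; norm_num
        have heq : Jr ξ ^ ((s-1)/2) * (‖a (ξ-ξ₂)‖ * (|(ξ₂:ℝ)| * ‖b ξ₂‖))
            = (Jr ξ ^ ((s-1)/2) * |(ξ₂:ℝ)| * Jr (ξ-ξ₂) ^ (-(t/2)) * Jr ξ₂ ^ (-(s/2)))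
              * (Jr (ξ-ξ₂) ^ (t/2) * ‖a (ξ-ξ₂)‖) * (Jr ξ₂ ^ (s/2) * ‖b ξ₂‖) := by
          calc Jr ξ ^ ((s-1)/2) * (‖a (ξ-ξ₂)‖ * (|(ξ₂:ℝ)| * ‖b ξ₂‖))
              = Jr ξ ^ ((s-1)/2) * (‖a (ξ-ξ₂)‖ * (|(ξ₂:ℝ)| * ‖b ξ₂‖))
                * ((Jr (ξ-ξ₂) ^ (-(t/2)) * Jr (ξ-ξ₂) ^ (t/2))
                  * (Jr ξ₂ ^ (-(s/2)) * Jr ξ₂ ^ (s/2))) := by rw [c1, c2]; ring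
            _ = (Jr ξ ^ ((s-1)/2) * |(ξ₂:ℝ)| * Jr (ξ-ξ₂) ^ (-(t/2)) * Jr ξ₂ ^ (-(s/2)))
              * (Jr (ξ-ξ₂) ^ (t/2) * ‖a (ξ-ξ₂)‖) * (Jr ξ₂ ^ (s/2) * ‖b ξ₂‖) := by ring
        rw [hKAval, hA1def, hBsdef]
        dsimp only
        rw [← ENNReal.ofReal_mul (by positivity), ← ENNReal.ofReal_mul (by positivity),
          ← ENNReal.ofReal_mul (by positivity)]
        exact congrArg ENNReal.ofReal heq
      · refine le_trans (le_of_eq ?_) le_add_self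
        have hKBval : KBr ξ ξ₂
            = Jr ξ ^ ((s-1)/2) * |(ξ₂:ℝ)| * Jr (ξ-ξ₂) ^ (-(s/2)) * Jr ξ₂ ^ (-(t/2)) := by
          rw [hKBrdef]; simp only [if_neg hc]
        have c1 : Jr (ξ-ξ₂) ^ (-(s/2)) * Jr (ξ-ξ₂) ^ (s/2) = 1 := by
          rw [← Real.rpow_add (Jr_pos _)]; norm_num
        have c2 : Jr ξ₂ ^ (-(t/2)) * Jr ξ₂ ^ (t/2) = 1 := by
          rw [← Real.rpow_add (Jr_pos _)]; norm_num
        have heq : Jr ξ ^ ((s-1)/2) * (‖a (ξ-ξ₂)‖ * (|(ξ₂:ℝ)| * ‖b ξ₂‖))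
            = (Jr ξ ^ ((s-1)/2) * |(ξ₂:ℝ)| * Jr (ξ-ξ₂) ^ (-(s/2)) * Jr ξ₂ ^ (-(t/2)))
              * (Jr (ξ-ξ₂) ^ (s/2) * ‖a (ξ-ξ₂)‖) * (Jr ξ₂ ^ (t/2) * ‖b ξ₂‖) := by
          calc Jr ξ ^ ((s-1)/2) * (‖a (ξ-ξ₂)‖ * (|(ξ₂:ℝ)| * ‖b ξ₂‖))
              = Jr ξ ^ ((s-1)/2) * (‖a (ξ-ξ₂)‖ * (|(ξ₂:ℝ)| * ‖b ξ₂‖))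
                * ((Jr (ξ-ξ₂) ^ (-(s/2)) * Jr (ξ-ξ₂) ^ (s/2))
                  * (Jr ξ₂ ^ (-(t/2)) * Jr ξ₂ ^ (t/2))) := by rw [c1, c2]; ring
            _ = (Jr ξ ^ ((s-1)/2) * |(ξ₂:ℝ)| * Jr (ξ-ξ₂) ^ (-(s/2)) * Jr ξ₂ ^ (-(t/2)))
              * (Jr (ξ-ξ₂) ^ (s/2) * ‖a (ξ-ξ₂)‖) * (Jr ξ₂ ^ (t/2) * ‖b ξ₂‖) := by ring
        rw [hKBval, hAsdef, hB1def]
        dsimp only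
        rw [← ENNReal.ofReal_mul (by positivity), ← ENNReal.ofReal_mul (by positivity),
          ← ENNReal.ofReal_mul (by positivity)]
        exact congrArg ENNReal.ofReal heq
    have hnormfac : ‖(1 / (Real.sqrt (2 * Real.pi) : ℂ))‖ ≤ 1 := by
      have hsq : (1:ℝ) ≤ Real.sqrt (2*Real.pi) := by
        rw [show (1:ℝ) = Real.sqrt 1 by rw [Real.sqrt_one]]
        exact Real.sqrt_le_sqrt (by nlinarith [Real.pi_gt_three])
      rw [norm_div, norm_one, Complex.norm_real, Real.norm_eq_abs, _root_.abs_of_nonneg (Real.sqrt_nonneg _)]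
      rw [div_le_one (by linarith)]
      exact hsq
    have hpd : ENNReal.ofReal ‖prodDx a b ξ‖
        ≤ ∑' ξ₂ : ℤ, ENNReal.ofReal (‖a (ξ-ξ₂)‖ * (|(ξ₂:ℝ)| * ‖b ξ₂‖)) := by
      unfold prodDx
      rw [norm_mul]
      calc ENNReal.ofReal (‖(1 / (Real.sqrt (2 * Real.pi) : ℂ))‖
              * ‖∑' ξ₂ : ℤ, a (ξ - ξ₂) * (Complex.I * (ξ₂:ℂ)) * b ξ₂‖)
          ≤ ENNReal.ofReal (1 * ‖∑' ξ₂ : ℤ, a (ξ - ξ₂) * (Complex.I * (ξ₂:ℂ)) * b ξ₂‖) :=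
            ENNReal.ofReal_le_ofReal
              (mul_le_mul_of_nonneg_right hnormfac (norm_nonneg _))
        _ = ENNReal.ofReal ‖∑' ξ₂ : ℤ, a (ξ - ξ₂) * (Complex.I * (ξ₂:ℂ)) * b ξ₂‖ := by
            rw [one_mul]
        _ ≤ ∑' ξ₂ : ℤ, ENNReal.ofReal ‖a (ξ - ξ₂) * (Complex.I * (ξ₂:ℂ)) * b ξ₂‖ :=
            enn_norm_tsum_le _
        _ = ∑' ξ₂ : ℤ, ENNReal.ofReal (‖a (ξ-ξ₂)‖ * (|(ξ₂:ℝ)| * ‖b ξ₂‖)) := by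
            refine tsum_congr fun ξ₂ => ?_
            congr 1
            rw [norm_mul, norm_mul, norm_mul, Complex.norm_I, one_mul]
            rw [show ((ξ₂:ℤ):ℂ) = (((ξ₂:ℤ):ℝ):ℂ) by push_cast; ring, Complex.norm_real,
              Real.norm_eq_abs]
            ring
    have h1 : ENNReal.ofReal (Jr ξ ^ ((s-1)/2) * ‖prodDx a b ξ‖) ≤ SA ξ + SB ξ := by
      calc ENNReal.ofReal (Jr ξ ^ ((s-1)/2) * ‖prodDx a b ξ‖)
          = ENNReal.ofReal (Jr ξ ^ ((s-1)/2)) * ENNReal.ofReal ‖prodDx a b ξ‖ :=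
            ENNReal.ofReal_mul (Real.rpow_nonneg (Jr_pos ξ).le _)
        _ ≤ ENNReal.ofReal (Jr ξ ^ ((s-1)/2))
            * ∑' ξ₂ : ℤ, ENNReal.ofReal (‖a (ξ-ξ₂)‖ * (|(ξ₂:ℝ)| * ‖b ξ₂‖)) :=
            mul_le_mul_right hpd _
        _ = ∑' ξ₂ : ℤ, ENNReal.ofReal (Jr ξ ^ ((s-1)/2))
            * ENNReal.ofReal (‖a (ξ-ξ₂)‖ * (|(ξ₂:ℝ)| * ‖b ξ₂‖)) := ENNReal.tsum_mul_left.symm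
        _ ≤ ∑' ξ₂ : ℤ, (ENNReal.ofReal (KAr ξ ξ₂) * A1 (ξ-ξ₂) * Bs ξ₂
            + ENNReal.ofReal (KBr ξ ξ₂) * As (ξ-ξ₂) * B1 ξ₂) :=
            Summable.tsum_le_tsum hterm ENNReal.summable ENNReal.summable
        _ = SA ξ + SB ξ := by
            rw [ENNReal.tsum_add, hSAdef, hSBdef]
    calc ENNReal.ofReal (Jr ξ ^ (s-1) * ‖prodDx a b ξ‖^2)
        = (ENNReal.ofReal (Jr ξ ^ ((s-1)/2) * ‖prodDx a b ξ‖))^2 := by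
          rw [← ENNReal.ofReal_pow (by positivity), mul_pow, rpow_sq (Jr_pos ξ).le,
            show 2*((s-1)/2) = s-1 by ring]
      _ ≤ (SA ξ + SB ξ)^2 := by gcongr
  -- squared norms
  have hnorm : ∀ σ : ℝ, 0 < σ → σ ≤ s → ∀ f : ℤ → ℂ,
      Summable (fun ξ : ℤ => Jr ξ ^ s * ‖f ξ‖ ^ 2) →
      ∑' ξ : ℤ, (ENNReal.ofReal (Jr ξ ^ (σ/2) * ‖f ξ‖))^2 = ENNReal.ofReal (Hsq σ f) := by
    intro σ hσ hσs f hf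
    have hsum : Summable (fun ξ : ℤ => Jr ξ ^ σ * ‖f ξ‖ ^ 2) := by
      refine Summable.of_nonneg_of_le (fun ξ => by positivity) (fun ξ => ?_) hf
      exact mul_le_mul_of_nonneg_right
        (Real.rpow_le_rpow_of_exponent_le (Jr_one_le ξ) hσs) (by positivity)
    rw [hH σ f, ENNReal.ofReal_tsum_of_nonneg (fun ξ => by positivity) hsum]
    refine tsum_congr fun ξ => ?_
    rw [← ENNReal.ofReal_pow (by positivity), mul_pow, rpow_sq (Jr_pos ξ).le,
      show 2*(σ/2) = σ by ring]
  -- main estimate in ℝ≥0∞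
  have hHnn : ∀ (σ : ℝ) (f : ℤ → ℂ), 0 ≤ Hsq σ f := by
    intro σ f
    rw [hH]
    exact tsum_nonneg fun ξ => by positivity
  have hmain : ENNReal.ofReal (Hsq (s-1) (prodDx a b))
      ≤ ENNReal.ofReal (4*(MA*(Hsq t a * Hsq s b) + MB*(Hsq s a * Hsq t b))) := by
    have hP : ∑' ξ : ℤ, ENNReal.ofReal (Jr ξ ^ (s-1) * ‖prodDx a b ξ‖^2)
        ≤ ENNReal.ofReal (4*(MA*(Hsq t a * Hsq s b) + MB*(Hsq s a * Hsq t b))) := by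
      calc ∑' ξ : ℤ, ENNReal.ofReal (Jr ξ ^ (s-1) * ‖prodDx a b ξ‖^2)
          ≤ ∑' ξ : ℤ, (SA ξ + SB ξ)^2 :=
            Summable.tsum_le_tsum hsplit ENNReal.summable ENNReal.summable
        _ ≤ ∑' ξ : ℤ, 4*((SA ξ)^2 + (SB ξ)^2) :=
            Summable.tsum_le_tsum (fun ξ => sq_add_le_four _ _) ENNReal.summable ENNReal.summable
        _ = 4*((∑' ξ : ℤ, (SA ξ)^2) + ∑' ξ : ℤ, (SB ξ)^2) := by
            rw [ENNReal.tsum_mul_left, ENNReal.tsum_add]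
        _ ≤ 4*(ENNReal.ofReal MA * (∑' n : ℤ, (A1 n)^2) * (∑' n : ℤ, (Bs n)^2)
            + ENNReal.ofReal MB * (∑' n : ℤ, (As n)^2) * (∑' n : ℤ, (B1 n)^2)) := by
            apply mul_le_mul_right
            apply add_le_add
            · rw [hSAdef]
              exact schurA (fun ξ ξ₂ => ENNReal.ofReal (KAr ξ ξ₂)) A1 Bs _ hKA
            · rw [hSBdef]
              exact schurB (fun ξ ξ₂ => ENNReal.ofReal (KBr ξ ξ₂)) As B1 _ hKB
        _ = 4*(ENNReal.ofReal MA * ENNReal.ofReal (Hsq t a) * ENNReal.ofReal (Hsq s b)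
            + ENNReal.ofReal MB * ENNReal.ofReal (Hsq s a) * ENNReal.ofReal (Hsq t b)) := by
            rw [hA1def, hAsdef, hB1def, hBsdef]
            rw [hnorm t (by rw [ht]; linarith) hts.le a ha,
              hnorm s (by linarith) le_rfl a ha,
              hnorm t (by rw [ht]; linarith) hts.le b hb,
              hnorm s (by linarith) le_rfl b hb]
        _ = ENNReal.ofReal (4*(MA*(Hsq t a * Hsq s b) + MB*(Hsq s a * Hsq t b))) := by
            rw [ENNReal.ofReal_mul (by norm_num : (0:ℝ) ≤ 4),
              ENNReal.ofReal_add (mul_nonneg hMA (mul_nonneg (hHnn t a) (hHnn s b)))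
                (mul_nonneg hMB (mul_nonneg (hHnn s a) (hHnn t b))),
              ENNReal.ofReal_mul hMA, ENNReal.ofReal_mul hMB,
              ENNReal.ofReal_mul (hHnn t a), ENNReal.ofReal_mul (hHnn s a)]
            rw [show ((4:ℝ≥0∞)) = ENNReal.ofReal (4:ℝ) by simp]
            ring
    by_cases hsummable : Summable (fun ξ : ℤ => Jr ξ ^ (s-1) * ‖prodDx a b ξ‖^2)
    · rw [hH, ENNReal.ofReal_tsum_of_nonneg (fun ξ => by positivity) hsummable]
      exact hP
    · rw [hH (s-1) (prodDx a b), tsum_eq_zero_of_not_summable hsummable]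
      simp
  -- real endgame
  have hXA : 0 ≤ (Hsq t a) ^ ((1:ℝ)/2) * (Hsq s b) ^ ((1:ℝ)/2) :=
    mul_nonneg (Real.rpow_nonneg (hHnn t a) _) (Real.rpow_nonneg (hHnn s b) _)
  have hXB : 0 ≤ (Hsq s a) ^ ((1:ℝ)/2) * (Hsq t b) ^ ((1:ℝ)/2) :=
    mul_nonneg (Real.rpow_nonneg (hHnn s a) _) (Real.rpow_nonneg (hHnn t b) _)
  have hR : 0 ≤ 4*(MA*(Hsq t a * Hsq s b) + MB*(Hsq s a * Hsq t b)) := by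
    have := mul_nonneg hMA (mul_nonneg (hHnn t a) (hHnn s b))
    have := mul_nonneg hMB (mul_nonneg (hHnn s a) (hHnn t b))
    linarith
  have hHle : Hsq (s-1) (prodDx a b) ≤ 4*(MA*(Hsq t a * Hsq s b) + MB*(Hsq s a * Hsq t b)) :=
    (ENNReal.ofReal_le_ofReal_iff hR).mp hmain
  set XA : ℝ := (Hsq t a) ^ ((1:ℝ)/2) * (Hsq s b) ^ ((1:ℝ)/2) with hXAdef
  set XB : ℝ := (Hsq s a) ^ ((1:ℝ)/2) * (Hsq t b) ^ ((1:ℝ)/2) with hXBdef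
  have hXA2 : XA^2 = Hsq t a * Hsq s b := by
    rw [hXAdef, mul_pow, rpow_sq (hHnn t a), rpow_sq (hHnn s b),
      show 2*((1:ℝ)/2) = 1 by norm_num, Real.rpow_one, Real.rpow_one]
  have hXB2 : XB^2 = Hsq s a * Hsq t b := by
    rw [hXBdef, mul_pow, rpow_sq (hHnn s a), rpow_sq (hHnn t b),
      show 2*((1:ℝ)/2) = 1 by norm_num, Real.rpow_one, Real.rpow_one]
  have key : Hsq (s-1) (prodDx a b) ≤ (4*(MA+MB)) * (XA + XB)^2 := by
    have h1 : Hsq (s-1) (prodDx a b) ≤ 4*(MA*XA^2 + MB*XB^2) := by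
      rw [hXA2, hXB2]; exact hHle
    have h2 : 4*(MA*XA^2 + MB*XB^2) ≤ (4*(MA+MB)) * (XA + XB)^2 := by
      nlinarith [mul_nonneg hMA (mul_nonneg hXA hXB), mul_nonneg hMB (mul_nonneg hXA hXB),
        mul_nonneg hMA (mul_nonneg hXB hXB), mul_nonneg hMB (mul_nonneg hXA hXA)]
    linarith
  calc (Hsq (s-1) (prodDx a b)) ^ ((1:ℝ)/2)
      ≤ ((4*(MA+MB)) * (XA + XB)^2) ^ ((1:ℝ)/2) :=
        Real.rpow_le_rpow (hHnn _ _) key (by norm_num)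
    _ = (4*(MA+MB)) ^ ((1:ℝ)/2) * ((XA + XB)^2) ^ ((1:ℝ)/2) :=
        Real.mul_rpow (by linarith) (by positivity)
    _ = (4*(MA+MB)) ^ ((1:ℝ)/2) * (XA + XB) := by
        rw [← Real.rpow_natCast (XA+XB) 2, ← Real.rpow_mul (by linarith)]
        norm_num
    _ ≤ (Real.sqrt (4*(MA+MB)) + 1) * (XA + XB) := by
        apply mul_le_mul_of_nonneg_right _ (by linarith)
        rw [show (4*(MA+MB)) ^ ((1:ℝ)/2) = Real.sqrt (4*(MA+MB)) from (Real.sqrt_eq_rpow _).symm]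
        linarith [Real.sqrt_nonneg (4*(MA+MB))]
end
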